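/- Mixin label preservation: let R ≡ ⟨l_i = N_i | i ∈ I⟩ be a record whose free variables are contained in {c, t, s}, and let M ≡ λc. Y (λt. λs. (c s) ⊕ R), where Y ≡ λf.(λx.f(x x))(λx.f(x x)) is Curry's fixed point combinator. Then for every type σ ∈ 𝕋, every type τ ∈ 𝕋 and every label l ∉ lbl(R), the judgment ⊢ M : (σ→⟨l:τ⟩) → (σ→⟨l:τ⟩) is derivable from the empty basis. -/

import Mathlib

/-- Terms of the record calculus `Λ_R`, with de Bruijn indices for bound variables
(so that terms are identified up to α-conversion) and labels drawn from `ℕ`.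
Records are finite lists of label/term pairs; in `merge M fs` the right operand
is syntactically a record. -/
inductive Tm where
  | var : Nat → Tm
  | lam : Tm → Tm
  | app : Tm → Tm → Tm
  | sel : Tm → Nat → Tm
  | rcd : List (Nat × Tm) → Tm
  | merge : Tm → List (Nat × Tm) → Tm

namespace Tm

/-- The list of field labels of a record. -/
def keys (fs : List (Nat × Tm)) : List Nat := fs.map Prod.fst

/-- The set of field labels `lbl(R)` of a record. -/
def lblR (fs : List (Nat × Tm)) : Finset Nat := (keys fs).toFinset

/-- Record merge on field lists: fields of the first record whose label does not
occur in the second record, followed by all fields of the second record. -/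
def mergeFields (fs gs : List (Nat × Tm)) : List (Nat × Tm) :=
  fs.filter (fun p => decide (p.1 ∉ keys gs)) ++ gs

end Tm
/-- Intersection and record types `𝕋`. Record types are the types satisfying `IsRec`. -/
inductive Ty where
  | const : Nat → Ty
  | omega : Ty
  | arrow : Ty → Ty → Ty
  | inter : Ty → Ty → Ty
  | empty : Ty
  | fld : Nat → Ty → Ty
  | merge : Ty → Ty → Ty
deriving DecidableEq

/-- The record types `𝕋_R ⊆ 𝕋`. -/
inductive IsRec : Ty → Prop where
  | empty : IsRec .empty
  | fld (l : Nat) (σ : Ty) : IsRec (.fld l σ)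
  | merge {ρ₁ ρ₂ : Ty} : IsRec ρ₁ → IsRec ρ₂ → IsRec (.merge ρ₁ ρ₂)
  | inter {ρ₁ ρ₂ : Ty} : IsRec ρ₁ → IsRec ρ₂ → IsRec (.inter ρ₁ ρ₂)

/-- Subtyping on `𝕋`: the least preorder satisfying the BCD axioms together with
the record and record-merge axioms. -/
inductive TySub : Ty → Ty → Prop where
  | refl (σ : Ty) : TySub σ σ
  | trans {σ τ υ : Ty} : TySub σ τ → TySub τ υ → TySub σ υ
  | le_omega (σ : Ty) : TySub σ .omega
  | omega_arrow : TySub .omega (.arrow .omega .omega)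
  | inter_left (σ τ : Ty) : TySub (.inter σ τ) σ
  | inter_right (σ τ : Ty) : TySub (.inter σ τ) τ
  | le_inter {σ τ₁ τ₂ : Ty} : TySub σ τ₁ → TySub σ τ₂ → TySub σ (.inter τ₁ τ₂)
  | arrow_inter (σ τ₁ τ₂ : Ty) :
      TySub (.inter (.arrow σ τ₁) (.arrow σ τ₂)) (.arrow σ (.inter τ₁ τ₂))
  | arrow_mono {σ₁ σ₂ τ₁ τ₂ : Ty} : TySub σ₂ σ₁ → TySub τ₁ τ₂ →
      TySub (.arrow σ₁ τ₁) (.arrow σ₂ τ₂)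
  | fld_empty (l : Nat) (σ : Ty) : TySub (.fld l σ) .empty
  | fld_inter (l : Nat) (σ τ : Ty) :
      TySub (.inter (.fld l σ) (.fld l τ)) (.fld l (.inter σ τ))
  | fld_mono {σ τ : Ty} (l : Nat) : TySub σ τ → TySub (.fld l σ) (.fld l τ)
  | merge_empty_r {ρ : Ty} : IsRec ρ → TySub (.merge ρ .empty) ρ
  | merge_empty_r' {ρ : Ty} : IsRec ρ → TySub ρ (.merge ρ .empty)
  | merge_empty_l {ρ : Ty} : IsRec ρ → TySub (.merge .empty ρ) ρ
  | merge_empty_l' {ρ : Ty} : IsRec ρ → TySub ρ (.merge .empty ρ)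
  | merge_assoc {ρ₁ ρ₂ ρ₃ : Ty} : IsRec ρ₁ → IsRec ρ₂ → IsRec ρ₃ →
      TySub (.merge (.merge ρ₁ ρ₂) ρ₃) (.merge ρ₁ (.merge ρ₂ ρ₃))
  | merge_assoc' {ρ₁ ρ₂ ρ₃ : Ty} : IsRec ρ₁ → IsRec ρ₂ → IsRec ρ₃ →
      TySub (.merge ρ₁ (.merge ρ₂ ρ₃)) (.merge (.merge ρ₁ ρ₂) ρ₃)
  | merge_inter {ρ₁ ρ₂ ρ₃ : Ty} : IsRec ρ₁ → IsRec ρ₂ → IsRec ρ₃ →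
      TySub (.merge (.inter ρ₁ ρ₂) ρ₃) (.inter (.merge ρ₁ ρ₃) (.merge ρ₂ ρ₃))
  | merge_inter' {ρ₁ ρ₂ ρ₃ : Ty} : IsRec ρ₁ → IsRec ρ₂ → IsRec ρ₃ →
      TySub (.inter (.merge ρ₁ ρ₃) (.merge ρ₂ ρ₃)) (.merge (.inter ρ₁ ρ₂) ρ₃)
  | fld_absorb {ρ : Ty} (l : Nat) (σ τ : Ty) : IsRec ρ →
      TySub (.merge (.fld l σ) (.inter (.fld l τ) ρ)) (.inter (.fld l τ) ρ)
  | fld_absorb' {ρ : Ty} (l : Nat) (σ τ : Ty) : IsRec ρ →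
      TySub (.inter (.fld l τ) ρ) (.merge (.fld l σ) (.inter (.fld l τ) ρ))
  | fld_comm {ρ : Ty} {l l' : Nat} (σ τ : Ty) : l ≠ l' → IsRec ρ →
      TySub (.merge (.fld l σ) (.inter (.fld l' τ) ρ))
          (.inter (.fld l' τ) (.merge (.fld l σ) ρ))
  | fld_comm' {ρ : Ty} {l l' : Nat} (σ τ : Ty) : l ≠ l' → IsRec ρ →
      TySub (.inter (.fld l' τ) (.merge (.fld l σ) ρ))
          (.merge (.fld l σ) (.inter (.fld l' τ) ρ))
  | merge_mono_l {ρ₁ ρ₂ ρ : Ty} : IsRec ρ₁ → IsRec ρ₂ → IsRec ρ →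
      TySub ρ₁ ρ₂ → TySub (.merge ρ₁ ρ) (.merge ρ₂ ρ)
  | merge_congr_r {ρ ρ₁ ρ₂ : Ty} : IsRec ρ → IsRec ρ₁ → IsRec ρ₂ →
      TySub ρ₁ ρ₂ → TySub ρ₂ ρ₁ → TySub (.merge ρ ρ₁) (.merge ρ ρ₂)

/-- Type equality: mutual subtyping. -/
def TyEq (σ τ : Ty) : Prop := TySub σ τ ∧ TySub τ σ
/-- The label map on record types. -/
def lbl : Ty → Finset Nat
  | .const _ => ∅
  | .omega => ∅
  | .arrow _ _ => ∅
  | .empty => ∅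
  | .fld l _ => {l}
  | .inter ρ₁ ρ₂ => lbl ρ₁ ∪ lbl ρ₂
  | .merge ρ₁ ρ₂ => lbl ρ₁ ∪ lbl ρ₂
/-- The type assignment system for `Λ_R`. With de Bruijn indices, a basis `Γ` is a
list of types, extension `Γ, x:σ` is `σ :: Γ`, and the axiom rule looks up the
type of a variable index in `Γ`. -/
inductive Typing : List Ty → Tm → Ty → Prop where
  | var {Γ : List Ty} {x : Nat} {σ : Ty} :
      Γ[x]? = some σ → Typing Γ (.var x) σ
  | lam {Γ : List Ty} {M : Tm} {σ τ : Ty} :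
      Typing (σ :: Γ) M τ → Typing Γ (.lam M) (.arrow σ τ)
  | app {Γ : List Ty} {M N : Tm} {σ τ : Ty} :
      Typing Γ M (.arrow σ τ) → Typing Γ N σ → Typing Γ (.app M N) τ
  | inter {Γ : List Ty} {M : Tm} {σ τ : Ty} :
      Typing Γ M σ → Typing Γ M τ → Typing Γ M (.inter σ τ)
  | omega {Γ : List Ty} (M : Tm) : Typing Γ M .omega
  | sub {Γ : List Ty} {M : Tm} {σ τ : Ty} :
      Typing Γ M σ → TySub σ τ → Typing Γ M τ
  | empty {Γ : List Ty} (fs : List (Nat × Tm)) : Typing Γ (.rcd fs) .empty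
  | rcd {Γ : List Ty} {fs : List (Nat × Tm)} {l : Nat} {M : Tm} {σ : Ty} :
      List.lookup l fs = some M → Typing Γ M σ → Typing Γ (.rcd fs) (.fld l σ)
  | sel {Γ : List Ty} {M : Tm} {l : Nat} {σ : Ty} :
      Typing Γ M (.fld l σ) → Typing Γ (.sel M l) σ
  | merge {Γ : List Ty} {M : Tm} {fs : List (Nat × Tm)} {ρ₁ ρ₂ : Ty} :
      Typing Γ M ρ₁ → Typing Γ (.rcd fs) ρ₂ → IsRec ρ₁ → IsRec ρ₂ →
      Tm.lblR fs = lbl ρ₂ → Typing Γ (.merge M fs) (.merge ρ₁ ρ₂)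
/-- `FVBelow k M`: all free (de Bruijn) variables of `M` are `< k`. -/
inductive FVBelow : Nat → Tm → Prop where
  | var {k x : Nat} : x < k → FVBelow k (.var x)
  | lam {k : Nat} {M : Tm} : FVBelow (k + 1) M → FVBelow k (.lam M)
  | app {k : Nat} {M N : Tm} : FVBelow k M → FVBelow k N → FVBelow k (.app M N)
  | sel {k : Nat} {M : Tm} (l : Nat) : FVBelow k M → FVBelow k (.sel M l)
  | rcd {k : Nat} {fs : List (Nat × Tm)} :
      (∀ p ∈ fs, FVBelow k p.2) → FVBelow k (.rcd fs)
  | merge {k : Nat} {M : Tm} {fs : List (Nat × Tm)} :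
      FVBelow k M → (∀ p ∈ fs, FVBelow k p.2) → FVBelow k (.merge M fs)

/-- Curry's fixed point combinator `Y ≡ λf.(λx.f(x x))(λx.f(x x))`. -/
def Ycomb : Tm :=
  .lam (.app (.lam (.app (.var 1) (.app (.var 0) (.var 0))))
             (.lam (.app (.var 1) (.app (.var 0) (.var 0)))))

/-- The mixin `M ≡ λc. Y (λt. λs. (c s) ⊕ R)` determined by the difference record `R`.
Under the three binders, `c` is de Bruijn index 2, `t` is 1 and `s` is 0. -/
def mixinTm (R : List (Nat × Tm)) : Tm :=
  .lam (.app Ycomb (.lam (.lam (.merge (.app (.var 2) (.var 0)) R))))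

/-!
Write `π := σ → ⟨l:τ⟩`. The fixed point combinator has type `(ω → π) → π` because the
self-application `x x` may be given type `ω`, so it suffices to give `λt. λs. (c s) ⊕ R` the
type `ω → π` under `c : π`. The record `R` has the type `omegaFieldsTy R = ⋂ₖ ⟨k:ω⟩` over its
labels `k`, and since `l` is none of them, the commutation axiom
`⟨l:α⟩ + (⟨k:β⟩ ∩ ρ) = ⟨k:β⟩ ∩ (⟨l:α⟩ + ρ)` pushes `⟨l:τ⟩` through all these fields, so
`⟨l:τ⟩ + ⋂ₖ ⟨k:ω⟩ ≤ ⟨l:τ⟩`.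
-/

def omegaFieldsTy : List (Nat × Tm) → Ty
  | [] => .empty
  | (k, _) :: fs => .inter (.fld k .omega) (omegaFieldsTy fs)

lemma isRec_omegaFieldsTy (fs : List (Nat × Tm)) : IsRec (omegaFieldsTy fs) := by
  induction fs with
  | nil => exact .empty
  | cons p _ ih => exact .inter (.fld p.1 .omega) ih

lemma lbl_omegaFieldsTy (fs : List (Nat × Tm)) : lbl (omegaFieldsTy fs) = Tm.lblR fs := by
  induction fs with
  | nil => rfl
  | cons p fs ih =>
    simp only [omegaFieldsTy, lbl, ih, Tm.lblR, Tm.keys, List.map_cons, List.toFinset_cons]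
    rfl

lemma exists_lookup_of_mem_keys {k : Nat} {fs : List (Nat × Tm)} (h : k ∈ Tm.keys fs) :
    ∃ M, fs.lookup k = some M := by
  rw [← Option.ne_none_iff_exists', Ne, List.lookup_eq_none_iff]
  obtain ⟨p, hp, rfl⟩ := List.mem_map.1 h
  intro hne
  simpa using hne p hp

lemma typing_rcd_omegaFieldsTy_of_subset (Γ : List Ty) {fs gs : List (Nat × Tm)}
    (hsub : Tm.keys gs ⊆ Tm.keys fs) : Typing Γ (.rcd fs) (omegaFieldsTy gs) := by
  induction gs with
  | nil => exact .empty fs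
  | cons p gs ih =>
    rw [Tm.keys, List.map_cons, List.cons_subset] at hsub
    obtain ⟨M, hM⟩ := exists_lookup_of_mem_keys hsub.1
    exact .inter (.rcd hM (.omega M)) (ih hsub.2)

lemma typing_rcd_omegaFieldsTy (Γ : List Ty) (fs : List (Nat × Tm)) :
    Typing Γ (.rcd fs) (omegaFieldsTy fs) :=
  typing_rcd_omegaFieldsTy_of_subset Γ (List.Subset.refl _)

lemma merge_fld_omegaFieldsTy_le {l : Nat} (τ : Ty) {fs : List (Nat × Tm)}
    (hl : l ∉ Tm.keys fs) : TySub (.merge (.fld l τ) (omegaFieldsTy fs)) (.fld l τ) := by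
  induction fs with
  | nil => exact .merge_empty_r (.fld l τ)
  | cons p fs ih =>
    rw [Tm.keys, List.map_cons, List.mem_cons, not_or] at hl
    exact .trans (.fld_comm τ .omega hl.1 (isRec_omegaFieldsTy fs))
      (.trans (.inter_right _ _) (ih hl.2))

lemma typing_Ycomb (Γ : List Ty) (π : Ty) : Typing Γ Ycomb (.arrow (.arrow .omega π) π) :=
  .lam (.app (.lam (.app (.var rfl) (.omega _))) (.omega _))

theorem mixin_label_preservation_general (R : List (Nat × Tm))
    (σ τ : Ty) (l : Nat) (hl : l ∉ Tm.lblR R) :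
    Typing [] (mixinTm R)
      (.arrow (.arrow σ (.fld l τ)) (.arrow σ (.fld l τ))) := by
  have hlR : l ∉ Tm.keys R := by simpa [Tm.lblR] using hl
  set π : Ty := .arrow σ (.fld l τ)
  have hcs : Typing [σ, .omega, π] (.app (.var 2) (.var 0)) (.fld l τ) :=
    .app (.var rfl) (.var rfl)
  have hmerge : Typing [σ, .omega, π] (.merge (.app (.var 2) (.var 0)) R)
      (.merge (.fld l τ) (omegaFieldsTy R)) :=
    .merge hcs (typing_rcd_omegaFieldsTy _ R) (.fld l τ) (isRec_omegaFieldsTy R)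
      (lbl_omegaFieldsTy R).symm
  have hbody : Typing [σ, .omega, π] (.merge (.app (.var 2) (.var 0)) R) (.fld l τ) :=
    .sub hmerge (merge_fld_omegaFieldsTy_le τ hlR)
  exact .lam (.app (typing_Ycomb [π] π) (.lam (.lam hbody)))

/-- Mixin label preservation: for `M ≡ λc. Y (λt. λs. (c s) ⊕ R)` and any types
`σ, τ` and label `l ∉ lbl(R)`, we have `⊢ M : (σ→⟨l:τ⟩) → (σ→⟨l:τ⟩)`. -/
theorem mixin_label_preservation (R : List (Nat × Tm))
    (hfv : ∀ p ∈ R, FVBelow 3 p.2) (hnd : (R.map Prod.fst).Nodup)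
    (σ τ : Ty) (l : Nat) (hl : l ∉ Tm.lblR R) :
    Typing [] (mixinTm R)
      (.arrow (.arrow σ (.fld l τ)) (.arrow σ (.fld l τ))) :=
  mixin_label_preservation_general R σ τ l hl
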